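/- For every integer k ≥ 2 and every constant γ ∈ (0, 1/k] there exists n₀ ∈ ℕ such that for all n ≥ n₀ the following holds. Let G be an (n,k,γ)-graph and let x: E(G) → ℝ⁺ be any positive edge weighting. Define, for each ordered (k−1)-tuple M of distinct vertices, π(M) := (Σ_{v∈V} x(M ∪ {v})) / (Σ_B Σ_{v∈V} x(B ∪ {v})), where the outer sum in the denominator is over all ordered (k−1)-tuples B of distinct vertices and x(S) := 0 for non-edges S. Then π is the unique stationary distribution of the simple x-walk Markov chain on ordered (k−1)-tuples of G. -/

import Mathlib

open scoped Classical

noncomputable section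

variable {V : Type*} [Fintype V] [DecidableEq V]

/-- An edge weighting extended by zero to non-edges. -/
def xw (E : Finset (Finset V)) (x : Finset V → ℝ) (e : Finset V) : ℝ :=
  if e ∈ E then x e else 0

/-- Unnormalised transition weight of an `x`-walk on the `k`-graph with edge set `E`:
the history `h` of the walk is stored most-recent-first, and the weight of moving to
`v` is `x` of the edge formed by the last `k−1` visited vertices together with `v`
(zero for non-edges); for the self-avoiding walk (`sa = true`) previously visited
vertices get weight zero. -/
def stepw (k : ℕ) (E : Finset (Finset V)) (x : Finset V → ℝ) (sa : Bool)
    (h : List V) (v : V) : ℝ :=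
  if sa = true ∧ v ∈ h then 0 else xw E x (insert v (h.take (k-1)).toFinset)

/-- Transition probability of the `x`-walk (zero if the walk has terminated). -/
def trp (k : ℕ) (E : Finset (Finset V)) (x : Finset V → ℝ) (sa : Bool)
    (h : List V) (v : V) : ℝ :=
  stepw k E x sa h v / ∑ w : V, stepw k E x sa h w

/-- The distribution of the history (most-recent-first) of the `x`-walk after `j`
steps, given the distribution `ν` of the initial history. -/
def walkDist (k : ℕ) (E : Finset (Finset V)) (x : Finset V → ℝ) (sa : Bool)
    (ν : List V → ℝ) : ℕ → List V → ℝ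
  | 0, l => ν l
  | _+1, [] => 0
  | j+1, v :: t => walkDist k E x sa ν j t * trp k E x sa t v

/-- The probability that the `x`-walk is at the vertex `v` at time `q`. -/
def headProb (k : ℕ) (E : Finset (Finset V)) (x : Finset V → ℝ) (sa : Bool)
    (ν : List V → ℝ) (q : ℕ) (v : V) : ℝ :=
  ∑ f : Fin (k - 1 + q) → V,
    if (List.ofFn f).head? = some v then walkDist k E x sa ν q (List.ofFn f) else 0

/-- The initial history (most-recent-first) determined by a starting
`(k−1)`-tuple `S`. -/
def startList {k : ℕ} (S : Fin (k-1) → V) : List V := (List.ofFn S).reverse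

/-- The initial history distribution concentrated on the starting tuple `S`. -/
def startDist {k : ℕ} (S : Fin (k-1) → V) : List V → ℝ :=
  fun l => if l = startList S then 1 else 0

/-- One-step transition probability of the simple `x`-walk viewed as a Markov chain on
ordered `(k−1)`-tuples: from the tuple `S` the chain moves to the tuple obtained by
shifting `S` one place and appending a new vertex `v`, with probability
`x(S ∪ {v}) / Σ_w x(S ∪ {w})` (where `x` is zero on non-edges). -/
def chainP (k : ℕ) (E : Finset (Finset V)) (x : Finset V → ℝ)
    (S T : Fin (k-1) → V) : ℝ :=
  ∑ v : V,
    (if T = (fun i : Fin (k-1) =>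
        if h : (i : ℕ) + 1 < k - 1 then S ⟨(i : ℕ) + 1, h⟩ else v) then (1 : ℝ) else 0) *
      (xw E x (insert v (Finset.image S Finset.univ)) /
        ∑ w : V, xw E x (insert w (Finset.image S Finset.univ)))

/-- `π` is a stationary distribution of the simple `x`-walk Markov chain on ordered
`(k−1)`-tuples of distinct vertices: it is a probability distribution supported on
injective tuples and satisfies `π P = π`. -/
def IsStationaryDist (k : ℕ) (E : Finset (Finset V)) (x : Finset V → ℝ)
    (π : (Fin (k-1) → V) → ℝ) : Prop :=
  (∀ S, 0 ≤ π S) ∧ (∀ S, ¬ Function.Injective S → π S = 0) ∧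
    (∑ S : Fin (k-1) → V, π S = 1) ∧
    (∀ T : Fin (k-1) → V, ∑ S : Fin (k-1) → V, π S * chainP k E x S T = π T)

/-- The initial history distribution (histories most-recent-first) induced by a
distribution `μ` on ordered starting `(k−1)`-tuples. -/
def tupleInit (k : ℕ) (μ : (Fin (k-1) → V) → ℝ) : List V → ℝ :=
  fun l => ∑ S : Fin (k-1) → V, if l = (List.ofFn S).reverse then μ S else 0

/-- The explicit stationary distribution of Proposition 5.6:
`π(M) = (Σ_v x(M ∪ {v})) / (Σ_B Σ_v x(B ∪ {v}))`, the outer sum over all ordered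
`(k−1)`-tuples `B` of distinct vertices (and `x` zero on non-edges). -/
def explicitPi (k : ℕ) {n : ℕ} (E : Finset (Finset (Fin n))) (x : Finset (Fin n) → ℝ)
    (M : Fin (k-1) → Fin n) : ℝ :=
  (∑ v : Fin n, xw E x (insert v (Finset.image M Finset.univ))) /
    ∑ B : Fin (k-1) → Fin n,
      if Function.Injective B then
        ∑ v : Fin n, xw E x (insert v (Finset.image B Finset.univ))
      else 0


/-!
Write `d(Q) = Σ_v x(Q ∪ {v})`. The tuples that can move to `T = (T₁, …, T_{k-1})` are exactly the
`(u, T₁, …, T_{k-2})`, and each of them does so along the edge `{u} ∪ T`; hence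
`Σ_S d(S) P(S, T) = Σ_u x({u} ∪ T) = d(T)`, and `π ∝ d` is stationary.

For uniqueness, let `f` solve `f P = f` and vanish off injective tuples. The equation at `T` reads
`f(T) = Σ_u (f / d)(u, T₁, …, T_{k-2}) · x({u} ∪ T)`, a combination with total weight `d(T)`. So if
`f / d` is maximal at `T`, it is maximal at every predecessor of `T`, and likewise for the minimum.
When the codegree exceeds `n / 2`, any two `(k-1)`-sets have a common neighbour; prepending common
neighbours `k - 1` times gives two tuples a common ancestor. Hence the maximum and the minimum of
`f / d` coincide, and `f` is a multiple of `d`.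
-/

open Finset Function

def xDegree (E : Finset (Finset V)) (x : Finset V → ℝ) (Q : Finset V) : ℝ :=
  ∑ v : V, xw E x (insert v Q)

def nbhd (E : Finset (Finset V)) (Q : Finset V) : Finset V :=
  univ.filter fun v => insert v Q ∈ E

def HasCommonNbrs (E : Finset (Finset V)) (j : ℕ) : Prop :=
  ∀ Q₁ Q₂ : Finset V, Q₁.card = j → Q₂.card = j → (nbhd E Q₁ ∩ nbhd E Q₂).Nonempty

section EdgeWeights

variable {α : Type*} [DecidableEq α] {E : Finset (Finset α)} {x : Finset α → ℝ}

lemma xw_nonneg (hx : ∀ e ∈ E, 0 < x e) (e : Finset α) : 0 ≤ xw E x e := by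
  unfold xw
  split_ifs with he
  exacts [(hx e he).le, le_rfl]

lemma xw_pos (hx : ∀ e ∈ E, 0 < x e) {e : Finset α} (he : e ∈ E) : 0 < xw E x e := by
  rw [xw, if_pos he]
  exact hx e he

lemma xw_eq_zero_of_notMem {e : Finset α} (he : e ∉ E) : xw E x e = 0 := if_neg he

lemma notMem_of_insert_mem {Q : Finset α} (hcard : ∀ e ∈ E, e.card = Q.card + 1) {u : α}
    (hu : insert u Q ∈ E) : u ∉ Q := by
  intro huQ
  have := hcard _ hu
  rw [insert_eq_of_mem huQ] at this
  omega

end EdgeWeights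

section Degrees

variable {E : Finset (Finset V)} {x : Finset V → ℝ}

lemma xDegree_nonneg (hx : ∀ e ∈ E, 0 < x e) (Q : Finset V) : 0 ≤ xDegree E x Q :=
  sum_nonneg fun _ _ => xw_nonneg hx _

lemma xw_insert_le_xDegree (hx : ∀ e ∈ E, 0 < x e) (Q : Finset V) (v : V) :
    xw E x (insert v Q) ≤ xDegree E x Q :=
  single_le_sum (fun w _ => xw_nonneg hx (insert w Q)) (mem_univ v)

lemma xDegree_pos (hx : ∀ e ∈ E, 0 < x e) {Q : Finset V} (hQ : (nbhd E Q).Nonempty) :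
    0 < xDegree E x Q := by
  obtain ⟨v, hv⟩ := hQ
  exact (xw_pos hx (mem_filter.1 hv).2).trans_le (xw_insert_le_xDegree hx Q v)

lemma xDegree_eq_zero_of_card_lt {k : ℕ} (hcard : ∀ e ∈ E, e.card = k) {Q : Finset V}
    (hQ : Q.card + 1 < k) : xDegree E x Q = 0 := by
  refine sum_eq_zero fun v _ => xw_eq_zero_of_notMem fun he => ?_
  have := card_insert_le v Q
  have := hcard _ he
  omega

lemma card_filter_subset_le_card_nbhd {Q : Finset V}
    (hcard : ∀ e ∈ E, e.card = Q.card + 1) :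
    (E.filter (Q ⊆ ·)).card ≤ (nbhd E Q).card := by
  refine card_le_card_of_surjOn (fun v => insert v Q) fun e he => ?_
  obtain ⟨heE, hQe⟩ := mem_filter.1 he
  obtain ⟨v, -, rfl⟩ := exists_eq_insert_iff.2 ⟨hQe, (hcard e heE).symm⟩
  exact ⟨v, mem_filter.2 ⟨mem_univ v, heE⟩, rfl⟩

/-- Two neighbourhoods of more than half of the vertices meet. -/
lemma hasCommonNbrs_of_codegree [Nonempty V] {j : ℕ} {γ : ℝ} (hγ : 0 < γ)
    (hcard : ∀ e ∈ E, e.card = j + 1)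
    (hdeg : ∀ Q : Finset V, Q.card = j →
      (1 / 2 + γ) * (Fintype.card V : ℝ) ≤ ((E.filter (Q ⊆ ·)).card : ℝ)) :
    HasCommonNbrs E j := by
  intro Q₁ Q₂ h₁ h₂
  have hnbhd : ∀ Q : Finset V, Q.card = j →
      (1 / 2 + γ) * (Fintype.card V : ℝ) ≤ ((nbhd E Q).card : ℝ) := fun Q hQ =>
    (hdeg Q hQ).trans <| Nat.cast_le.2 <| card_filter_subset_le_card_nbhd (hQ ▸ hcard)
  refine inter_nonempty_of_card_lt_card_add_card (subset_univ _) (subset_univ _) ?_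
  have hV : (0 : ℝ) < Fintype.card V := Nat.cast_pos.2 Fintype.card_pos
  have := hnbhd Q₁ h₁
  have := hnbhd Q₂ h₂
  rw [card_univ, ← Nat.cast_lt (α := ℝ), Nat.cast_add]
  nlinarith

end Degrees

section Tuples

variable {α : Type*} [DecidableEq α] {m : ℕ}

lemma image_cons (u : α) (t : Fin m → α) :
    univ.image (Fin.cons u t : Fin (m + 1) → α) = insert u (univ.image t) :=
  coe_injective <| by push_cast [coe_image, coe_univ, Set.image_univ, Fin.range_cons]; rfl

lemma image_snoc (t : Fin m → α) (v : α) :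
    univ.image (Fin.snoc t v : Fin (m + 1) → α) = insert v (univ.image t) :=
  coe_injective <| by push_cast [coe_image, coe_univ, Set.image_univ, Fin.range_snoc]; rfl

/-- The edge used by the step from `(u, T₀, …, T_{m-1})` to `T` is `{u} ∪ T`. -/
lemma insert_last_image_cons_init (u : α) (T : Fin (m + 1) → α) :
    insert (T (Fin.last m)) (univ.image (Fin.cons u (Fin.init T))) =
      insert u (univ.image T) := by
  conv_rhs => rw [← Fin.snoc_init_self T, image_snoc]
  rw [image_cons, insert_comm]

lemma card_image_univ_of_injective {S : Fin m → α} (hS : Injective S) :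
    (univ.image S).card = m := by
  rw [card_image_of_injective _ hS, card_univ, Fintype.card_fin]

lemma card_image_lt_of_not_injective {S : Fin m → α} (hS : ¬ Injective S) :
    (univ.image S).card < m := by
  refine lt_of_le_of_ne (by simpa using card_image_le (s := univ) (f := S)) fun h => hS ?_
  rw [← Set.injOn_univ, ← coe_univ]
  exact card_image_iff.1 (by simpa using h)

lemma injective_cons_init {T : Fin (m + 1) → α} (hT : Injective T) {u : α}
    (hu : u ∉ univ.image T) : Injective (Fin.cons u (Fin.init T) : Fin (m + 1) → α) := by
  refine Fin.cons_injective_iff.2 ⟨fun ⟨i, hi⟩ => hu ?_, hT.comp (Fin.castSucc_injective m)⟩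
  exact mem_image.2 ⟨_, mem_univ _, hi⟩

lemma notMem_image_of_insert_mem {E : Finset (Finset α)} (hcard : ∀ e ∈ E, e.card = m + 2)
    {S : Fin (m + 1) → α} (hS : Injective S) {u : α} (hu : insert u (univ.image S) ∈ E) :
    u ∉ univ.image S :=
  notMem_of_insert_mem (by rwa [card_image_univ_of_injective hS]) hu

end Tuples

section Chain

variable {m : ℕ} {E : Finset (Finset V)} {x : Finset V → ℝ}

lemma chainP_eq (S T : Fin (m + 1) → V) :
    chainP (m + 2) E x S T =
      if Fin.tail S = Fin.init T then
        xw E x (insert (T (Fin.last m)) (univ.image S)) / xDegree E x (univ.image S)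
      else 0 := by
  have hshift : ∀ v : V, (fun i : Fin (m + 2 - 1) =>
      if h : (i : ℕ) + 1 < m + 2 - 1 then S ⟨(i : ℕ) + 1, h⟩ else v) = Fin.snoc (Fin.tail S) v := by
    intro v
    funext i
    simp only [Fin.snoc, Fin.tail]
    split_ifs <;> first | rfl | omega
  have hiff : ∀ v : V,
      T = Fin.snoc (Fin.tail S) v ↔ Fin.tail S = Fin.init T ∧ v = T (Fin.last m) := by
    intro v
    conv_lhs => rw [← Fin.snoc_init_self T]
    rw [Fin.snoc_inj, eq_comm, @eq_comm _ (T _)]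
  simp_rw [chainP, hshift, hiff, ite_and, ite_mul, one_mul, zero_mul, sum_ite_irrel, sum_ite_eq',
    mem_univ, if_true, sum_const_zero]
  rfl

lemma sum_mul_chainP (f : (Fin (m + 1) → V) → ℝ) (T : Fin (m + 1) → V) :
    ∑ S : Fin (m + 1) → V, f S * chainP (m + 2) E x S T =
      ∑ u, f (Fin.cons u (Fin.init T)) * (xw E x (insert u (univ.image T)) /
        xDegree E x (univ.image (Fin.cons u (Fin.init T)))) := by
  rw [← (Fin.consEquiv fun _ => V).sum_comp, Fintype.sum_prod_type]
  refine sum_congr rfl fun u _ => ?_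
  simp_rw [Fin.consEquiv, Equiv.coe_fn_mk, chainP_eq, Fin.tail_cons, mul_ite, mul_zero, sum_ite_eq',
    mem_univ, if_true, insert_last_image_cons_init]

lemma sum_xDegree_mul_chainP (hx : ∀ e ∈ E, 0 < x e) (T : Fin (m + 1) → V) :
    ∑ S : Fin (m + 1) → V, xDegree E x (univ.image S) * chainP (m + 2) E x S T =
      xDegree E x (univ.image T) := by
  rw [sum_mul_chainP (fun S => xDegree E x (univ.image S))]
  refine sum_congr rfl fun u _ => ?_
  have hw : xw E x (insert u (univ.image T)) ≤
      xDegree E x (univ.image (Fin.cons u (Fin.init T))) := by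
    rw [← insert_last_image_cons_init]
    exact xw_insert_le_xDegree hx _ _
  rcases (xDegree_nonneg hx (univ.image (Fin.cons u (Fin.init T)))).eq_or_lt with hd | hd
  · rw [← hd] at hw ⊢
    rw [zero_mul, le_antisymm hw (xw_nonneg hx _)]
  · exact mul_div_cancel₀ _ hd.ne'

end Chain

section Uniqueness

variable {m : ℕ} {E : Finset (Finset V)} {x : Finset V → ℝ}

lemma xDegree_image_pos (hx : ∀ e ∈ E, 0 < x e) (hE : HasCommonNbrs E (m + 1))
    {S : Fin (m + 1) → V} (hS : Injective S) : 0 < xDegree E x (univ.image S) := by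
  have hQ := card_image_univ_of_injective hS
  exact xDegree_pos hx (Nonempty.mono inter_subset_left (hE _ _ hQ hQ))

lemma xDegree_image_eq_zero (hcard : ∀ e ∈ E, e.card = m + 2) {S : Fin (m + 1) → V}
    (hS : ¬ Injective S) : xDegree E x (univ.image S) = 0 :=
  xDegree_eq_zero_of_card_lt hcard (by have := card_image_lt_of_not_injective hS; omega)

/-- Maximum principle: where `f / d` attains its maximum `c`, it also does at every
predecessor. -/
lemma eq_mul_xDegree_cons_init (hcard : ∀ e ∈ E, e.card = m + 2) (hx : ∀ e ∈ E, 0 < x e)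
    (hE : HasCommonNbrs E (m + 1)) {f : (Fin (m + 1) → V) → ℝ}
    (hf : ∀ T : Fin (m + 1) → V, ∑ S : Fin (m + 1) → V, f S * chainP (m + 2) E x S T = f T) {c : ℝ}
    (hle : ∀ S, Injective S → f S ≤ c * xDegree E x (univ.image S))
    {T : Fin (m + 1) → V} (hT : Injective T) (hTc : f T = c * xDegree E x (univ.image T))
    {u : V} (hu : insert u (univ.image T) ∈ E) :
    f (Fin.cons u (Fin.init T)) = c * xDegree E x (univ.image (Fin.cons u (Fin.init T))) := by
  have hpred : ∀ v, insert v (univ.image T) ∈ E →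
      0 < xDegree E x (univ.image (Fin.cons v (Fin.init T))) ∧
        f (Fin.cons v (Fin.init T)) ≤ c * xDegree E x (univ.image (Fin.cons v (Fin.init T))) :=
    fun v hv => by
      have hinj := injective_cons_init hT (notMem_image_of_insert_mem hcard hT hv)
      exact ⟨xDegree_image_pos hx hE hinj, hle _ hinj⟩
  have hterm : ∀ v ∈ univ, f (Fin.cons v (Fin.init T)) *
      (xw E x (insert v (univ.image T)) / xDegree E x (univ.image (Fin.cons v (Fin.init T)))) ≤
        c * xw E x (insert v (univ.image T)) := by
    intro v _
    by_cases hv : insert v (univ.image T) ∈ E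
    · obtain ⟨hd, hfv⟩ := hpred v hv
      rw [mul_div_left_comm, mul_comm c]
      exact mul_le_mul_of_nonneg_left ((div_le_iff₀ hd).2 hfv) (xw_nonneg hx _)
    · simp [xw_eq_zero_of_notMem hv]
  have hsum : ∑ v, f (Fin.cons v (Fin.init T)) *
      (xw E x (insert v (univ.image T)) / xDegree E x (univ.image (Fin.cons v (Fin.init T)))) =
        ∑ v, c * xw E x (insert v (univ.image T)) := by
    rw [← sum_mul_chainP, hf, hTc, ← mul_sum]
    rfl
  have hu_eq := (sum_eq_sum_iff_of_le hterm).1 hsum u (mem_univ u)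
  obtain ⟨hd, -⟩ := hpred u hu
  have hw := xw_pos hx hu
  rw [mul_div_left_comm, mul_comm c] at hu_eq
  rw [← div_eq_iff hd.ne']
  exact mul_left_cancel₀ hw.ne' hu_eq

/-- Prepending common neighbours `m + 1` times turns two injective tuples into one. -/
lemma exists_common_of_backward_closed (hcard : ∀ e ∈ E, e.card = m + 2)
    (hE : HasCommonNbrs E (m + 1)) {P Q : (Fin (m + 1) → V) → Prop}
    (hP : ∀ T u, Injective T → P T → insert u (univ.image T) ∈ E → P (Fin.cons u (Fin.init T)))
    (hQ : ∀ T u, Injective T → Q T → insert u (univ.image T) ∈ E → Q (Fin.cons u (Fin.init T)))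
    {T₁ T₂ : Fin (m + 1) → V} (h₁ : Injective T₁) (h₂ : Injective T₂) (hP₁ : P T₁)
    (hQ₂ : Q T₂) : ∃ S, Injective S ∧ P S ∧ Q S := by
  suffices H : ∀ j : ℕ, ∃ S₁ S₂ : Fin (m + 1) → V, Injective S₁ ∧ Injective S₂ ∧ P S₁ ∧ Q S₂ ∧
      ∀ i : Fin (m + 1), (i : ℕ) < j → S₁ i = S₂ i by
    obtain ⟨S₁, S₂, hinj, -, hS₁, hS₂, hagree⟩ := H (m + 1)
    exact ⟨S₁, hinj, hS₁, funext (fun i => hagree i i.isLt) ▸ hS₂⟩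
  intro j
  induction j with
  | zero => exact ⟨T₁, T₂, h₁, h₂, hP₁, hQ₂, fun i hi => absurd hi (Nat.not_lt_zero _)⟩
  | succ j ih =>
    obtain ⟨S₁, S₂, hS₁, hS₂, hPS, hQS, hagree⟩ := ih
    have hc₁ := card_image_univ_of_injective hS₁
    have hc₂ := card_image_univ_of_injective hS₂
    obtain ⟨u, hu⟩ := hE _ _ hc₁ hc₂
    obtain ⟨hu₁, hu₂⟩ := mem_inter.1 hu
    replace hu₁ := (mem_filter.1 hu₁).2
    replace hu₂ := (mem_filter.1 hu₂).2
    refine ⟨_, _, injective_cons_init hS₁ (notMem_image_of_insert_mem hcard hS₁ hu₁),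
      injective_cons_init hS₂ (notMem_image_of_insert_mem hcard hS₂ hu₂),
      hP S₁ u hS₁ hPS hu₁, hQ S₂ u hS₂ hQS hu₂, fun i hi => ?_⟩
    cases i using Fin.cases with
    | zero => rfl
    | succ i =>
      simp only [Fin.cons_succ, Fin.init]
      exact hagree _ (by simp only [Fin.val_succ] at hi; simpa using hi)

lemma exists_eq_mul_xDegree (hcard : ∀ e ∈ E, e.card = m + 2) (hx : ∀ e ∈ E, 0 < x e)
    (hE : HasCommonNbrs E (m + 1)) {f : (Fin (m + 1) → V) → ℝ}
    (hf : ∀ T : Fin (m + 1) → V, ∑ S : Fin (m + 1) → V, f S * chainP (m + 2) E x S T = f T) :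
    ∃ c, ∀ S, Injective S → f S = c * xDegree E x (univ.image S) := by
  set ratio := fun S : Fin (m + 1) → V => f S / xDegree E x (univ.image S)
  rcases (univ.filter fun S : Fin (m + 1) → V => Injective S).eq_empty_or_nonempty with h | hne
  · exact ⟨0, fun S hS => absurd (mem_filter.2 ⟨mem_univ S, hS⟩) (h ▸ notMem_empty S)⟩
  obtain ⟨T₁, hT₁, hmax⟩ := exists_max_image _ ratio hne
  obtain ⟨T₂, hT₂, hmin⟩ := exists_min_image _ ratio hne
  have hpos : ∀ S, Injective S → 0 < xDegree E x (univ.image S) :=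
    fun S hS => xDegree_image_pos hx hE hS
  have hle : ∀ S, Injective S → f S ≤ ratio T₁ * xDegree E x (univ.image S) := fun S hS =>
    (div_le_iff₀ (hpos S hS)).1 (hmax S (mem_filter.2 ⟨mem_univ S, hS⟩))
  have hge : ∀ S, Injective S → ratio T₂ * xDegree E x (univ.image S) ≤ f S := fun S hS =>
    (le_div_iff₀ (hpos S hS)).1 (hmin S (mem_filter.2 ⟨mem_univ S, hS⟩))
  have hattains : ∀ T, Injective T → f T = ratio T * xDegree E x (univ.image T) := fun T hT =>
    (div_mul_cancel₀ _ (hpos T hT).ne').symm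
  obtain ⟨S, hS, hS₁, hS₂⟩ := exists_common_of_backward_closed hcard hE
    (P := fun S => f S = ratio T₁ * xDegree E x (univ.image S))
    -- `-f` also solves `f P = f`, so the maximum principle for `-f` handles the minimum of `f / d`
    (Q := fun S => -f S = -ratio T₂ * xDegree E x (univ.image S))
    (fun T u hT hPT hu => eq_mul_xDegree_cons_init hcard hx hE hf hle hT hPT hu)
    (fun T u hT hQT hu => eq_mul_xDegree_cons_init hcard hx hE (f := fun S => -f S)
      (fun T => by simp only [neg_mul, sum_neg_distrib, hf]) (fun S hS => by linarith [hge S hS])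
      hT hQT hu)
    (mem_filter.1 hT₁).2 (mem_filter.1 hT₂).2
    (hattains T₁ (mem_filter.1 hT₁).2) (by rw [hattains T₂ (mem_filter.1 hT₂).2]; ring)
  have hmax_eq_min : ratio T₁ = ratio T₂ :=
    mul_right_cancel₀ (hpos S hS).ne' (by linarith)
  exact ⟨ratio T₁, fun S hS => le_antisymm (hle S hS) (hmax_eq_min ▸ hge S hS)⟩

end Uniqueness

section ExplicitPi

variable {m n : ℕ} {E : Finset (Finset (Fin n))} {x : Finset (Fin n) → ℝ}

lemma explicitPi_eq (hcard : ∀ e ∈ E, e.card = m + 2) (M : Fin (m + 1) → Fin n) :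
    explicitPi (m + 2) E x M =
      xDegree E x (univ.image M) / ∑ B : Fin (m + 1) → Fin n, xDegree E x (univ.image B) := by
  rw [explicitPi]
  congr 1
  refine sum_congr rfl fun B _ => ?_
  split_ifs with hB
  · rfl
  · exact (xDegree_image_eq_zero hcard hB).symm

theorem isStationaryDist_explicitPi (hcard : ∀ e ∈ E, e.card = m + 2) (hx : ∀ e ∈ E, 0 < x e)
    (hE : HasCommonNbrs E (m + 1)) {S₀ : Fin (m + 1) → Fin n} (hS₀ : Injective S₀) :
    IsStationaryDist (m + 2) E x (explicitPi (m + 2) E x) := by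
  have hD : 0 < ∑ B : Fin (m + 1) → Fin n, xDegree E x (univ.image B) :=
    (xDegree_image_pos hx hE hS₀).trans_le
      (single_le_sum (fun B _ => xDegree_nonneg hx (univ.image B)) (mem_univ S₀))
  refine ⟨fun S => ?_, fun S hS => ?_, ?_, fun T => ?_⟩ <;> simp_rw [explicitPi_eq hcard]
  · exact div_nonneg (xDegree_nonneg hx _) hD.le
  · rw [xDegree_image_eq_zero hcard hS, zero_div]
  · rw [← sum_div]
    exact div_self hD.ne'
  · simp_rw [div_mul_eq_mul_div, ← sum_div]
    exact congrArg (· / _) (sum_xDegree_mul_chainP hx T)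

theorem eq_explicitPi_of_isStationaryDist (hcard : ∀ e ∈ E, e.card = m + 2)
    (hx : ∀ e ∈ E, 0 < x e) (hE : HasCommonNbrs E (m + 1)) {π : (Fin (m + 1) → Fin n) → ℝ}
    (hπ : IsStationaryDist (m + 2) E x π) : π = explicitPi (m + 2) E x := by
  obtain ⟨-, hzero, hsum, hstat⟩ := hπ
  obtain ⟨c, hc⟩ := exists_eq_mul_xDegree hcard hx hE hstat
  have hπc : ∀ S, π S = c * xDegree E x (univ.image S) := fun S => by
    by_cases hS : Injective S
    · exact hc S hS
    · rw [hzero S hS, xDegree_image_eq_zero hcard hS, mul_zero]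
  have hcD : c * ∑ B : Fin (m + 1) → Fin n, xDegree E x (univ.image B) = 1 := by
    rw [mul_sum, ← hsum]
    exact sum_congr rfl fun S _ => (hπc S).symm
  funext S
  rw [hπc, explicitPi_eq hcard, eq_div_iff (right_ne_zero_of_mul_eq_one hcD), mul_right_comm, hcD,
    one_mul]

end ExplicitPi

theorem stmt_13_general (k : ℕ) (hk : 2 ≤ k) (γ : ℝ) (hγ0 : 0 < γ) :
    ∃ n₀ : ℕ, ∀ n : ℕ, n₀ ≤ n →
    ∀ E : Finset (Finset (Fin n)),
      (∀ e ∈ E, e.card = k) →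
      (∀ S : Finset (Fin n), S.card = k - 1 →
        (1/2 + γ) * (n : ℝ) ≤ ((E.filter (fun e => S ⊆ e)).card : ℝ)) →
    ∀ x : Finset (Fin n) → ℝ, (∀ e ∈ E, 0 < x e) →
      IsStationaryDist k E x (explicitPi k E x) ∧
      ∀ π' : (Fin (k-1) → Fin n) → ℝ,
        IsStationaryDist k E x π' → π' = explicitPi k E x := by
  obtain ⟨m, rfl⟩ : ∃ m, k = m + 2 := ⟨k - 2, by omega⟩
  refine ⟨m + 1, fun n hn E hcard hdeg x hx => ?_⟩
  have : Nonempty (Fin n) := ⟨⟨0, by omega⟩⟩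
  have hE : HasCommonNbrs E (m + 1) :=
    hasCommonNbrs_of_codegree hγ0 hcard (by simpa using hdeg)
  exact ⟨isStationaryDist_explicitPi hcard hx hE (Fin.castLE_injective hn),
    fun π' => eq_explicitPi_of_isStationaryDist hcard hx hE⟩

/-- Proposition 5.6: for an `(n,k,γ)`-graph `G` (with `0 < γ ≤ 1/k` and `n` large) and
any positive edge weighting `x`, the distribution `explicitPi` is the unique stationary
distribution of the simple `x`-walk Markov chain on ordered `(k−1)`-tuples. -/
theorem stmt_13 (k : ℕ) (hk : 2 ≤ k) (γ : ℝ) (hγ0 : 0 < γ) (hγk : γ ≤ 1 / (k : ℝ)) :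
    ∃ n₀ : ℕ, ∀ n : ℕ, n₀ ≤ n →
    ∀ E : Finset (Finset (Fin n)),
      (∀ e ∈ E, e.card = k) →
      (∀ S : Finset (Fin n), S.card = k - 1 →
        (1/2 + γ) * (n : ℝ) ≤ ((E.filter (fun e => S ⊆ e)).card : ℝ)) →
    ∀ x : Finset (Fin n) → ℝ, (∀ e ∈ E, 0 < x e) →
      IsStationaryDist k E x (explicitPi k E x) ∧
      ∀ π' : (Fin (k-1) → Fin n) → ℝ,
        IsStationaryDist k E x π' → π' = explicitPi k E x :=
  stmt_13_general k hk γ hγ0
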